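/- arXiv:1502.04605 — 3 statements merged into one kernel-verified Lean document; each statement's English description precedes it below -/
import Mathlib

section
/- If f : [-1,1] → ℝ is convex and integrable, then (∫_{-1}^{1} f) - 2 f(0) ≤ f(-1) + f(1) - ∫_{-1}^{1} f. -/
/-! Bullen's inequality is the sum of the trapezoid (right Hermite–Hadamard) inequalities on
`[-1, 0]` and `[0, 1]`: on each half a convex function lies below its chord, and the chord
integrates to the trapezoid value. -/

open Set intervalIntegral

noncomputable def supOn (a b : ℝ) (f : ℝ → ℝ) : ℝ := ⨆ x : Set.Icc a b, |f x|

def IsC2On (a b : ℝ) (g g' g'' : ℝ → ℝ) : Prop :=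
  (∀ x ∈ Set.Icc a b, HasDerivWithinAt g (g' x) (Set.Icc a b) x) ∧
  (∀ x ∈ Set.Icc a b, HasDerivWithinAt g' (g'' x) (Set.Icc a b) x) ∧
  ContinuousOn g'' (Set.Icc a b)

noncomputable def KF (a b t : ℝ) (f : ℝ → ℝ) : ℝ :=
  sInf {v : ℝ | ∃ g g' g'', IsC2On a b g g' g'' ∧
    v = supOn a b (fun x => f x - g x) + t * supOn a b g''}

noncomputable def bullen (a b : ℝ) (f : ℝ → ℝ) : ℝ :=
  (f a + f b) / 2 + f ((a + b) / 2) - (2 / (b - a)) * ∫ x in a..b, f x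

noncomputable def bullenC (a b : ℝ) (n : ℕ) (x : ℕ → ℝ) (f : ℝ → ℝ) : ℝ :=
  (1 / (b - a)) * ∑ i ∈ Finset.range n, (x (i+1) - x i) *
    ((f (x i) + f (x (i+1))) / 2 + f ((x i + x (i+1)) / 2)
      - (2 / (x (i+1) - x i)) * ∫ t in (x i)..(x (i+1)), f t)

noncomputable def omega1 (a b : ℝ) (f : ℝ → ℝ) (h : ℝ) : ℝ :=
  sSup {v : ℝ | ∃ x ∈ Set.Icc a b, ∃ y ∈ Set.Icc a b, |x - y| ≤ h ∧ v = |f x - f y|}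

noncomputable def omega2 (a b : ℝ) (f : ℝ → ℝ) (h : ℝ) : ℝ :=
  sSup {v : ℝ | ∃ x t : ℝ, 0 ≤ t ∧ t ≤ h ∧ x - t ∈ Set.Icc a b ∧ x + t ∈ Set.Icc a b ∧
    v = |f (x + t) - 2 * f x + f (x - t)|}

lemma ConvexOn.mul_le_secant {f : ℝ → ℝ} {a b x : ℝ} (hf : ConvexOn ℝ (Icc a b) f)
    (hx : x ∈ Icc a b) : (b - a) * f x ≤ (b - x) * f a + (x - a) * f b := by
  obtain hab | hab := (hx.1.trans hx.2).eq_or_lt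
  · obtain rfl : x = a := le_antisymm (hab ▸ hx.2) hx.1
    simp [hab]
  have hba : 0 < b - a := sub_pos.2 hab
  have hcomb := hf.2 (left_mem_Icc.2 hab.le) (right_mem_Icc.2 hab.le)
    (div_nonneg (sub_nonneg.2 hx.2) hba.le) (div_nonneg (sub_nonneg.2 hx.1) hba.le)
    (by field_simp; ring)
  have hx' : (b - x) / (b - a) * a + (x - a) / (b - a) * b = x := by field_simp; ring
  simp only [smul_eq_mul, hx'] at hcomb
  calc (b - a) * f x ≤ (b - a) * ((b - x) / (b - a) * f a + (x - a) / (b - a) * f b) :=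
        mul_le_mul_of_nonneg_left hcomb hba.le
    _ = (b - x) * f a + (x - a) * f b := by field_simp

lemma ConvexOn.integral_le_trapezoid {f : ℝ → ℝ} {a b : ℝ} (hab : a ≤ b)
    (hf : ConvexOn ℝ (Icc a b) f) (hint : IntervalIntegrable f MeasureTheory.volume a b) :
    ∫ x in a..b, f x ≤ (b - a) * (f a + f b) / 2 := by
  obtain rfl | hab := hab.eq_or_lt
  · simp
  have hcont : Continuous fun x => (b - x) * f a + (x - a) * f b := by fun_prop
  have hsecant : ∫ x in a..b, ((b - x) * f a + (x - a) * f b) =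
      (b - a) * ((b - a) * (f a + f b) / 2) := by
    rw [integral_add ((by fun_prop : Continuous _).intervalIntegrable _ _)
      ((by fun_prop : Continuous _).intervalIntegrable _ _)]
    simp only [integral_mul_const, integral_sub intervalIntegrable_const intervalIntegrable_id,
      integral_sub intervalIntegrable_id intervalIntegrable_const, integral_id, integral_const,
      smul_eq_mul]
    ring
  have hmono : (b - a) * ∫ x in a..b, f x ≤ ∫ x in a..b, ((b - x) * f a + (x - a) * f b) := by
    rw [← integral_const_mul]
    exact integral_mono_on hab.le (hint.const_mul _) (hcont.intervalIntegrable _ _)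
      fun x hx => hf.mul_le_secant hx
  exact le_of_mul_le_mul_left (hsecant ▸ hmono) (sub_pos.2 hab)

theorem stmt1 (f : ℝ → ℝ)
    (hconv : ConvexOn ℝ (Set.Icc (-1 : ℝ) 1) f)
    (hint : IntervalIntegrable f MeasureTheory.volume (-1) 1) :
    (∫ x in (-1 : ℝ)..1, f x) - 2 * f 0 ≤ f (-1) + f 1 - ∫ x in (-1 : ℝ)..1, f x := by
  have hleft : IntervalIntegrable f MeasureTheory.volume (-1) 0 :=
    hint.mono_set (uIcc_subset_uIcc (by simp) (by simp [uIcc_of_le]))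
  have hright : IntervalIntegrable f MeasureTheory.volume 0 1 :=
    hint.mono_set (uIcc_subset_uIcc (by simp [uIcc_of_le]) (by simp))
  have h₁ := ConvexOn.integral_le_trapezoid (by norm_num)
    (hconv.subset (Icc_subset_Icc le_rfl zero_le_one) (convex_Icc _ _)) hleft
  have h₂ := ConvexOn.integral_le_trapezoid zero_le_one
    (hconv.subset (Icc_subset_Icc (by norm_num) le_rfl) (convex_Icc _ _)) hright
  rw [← integral_add_adjacent_intervals hleft hright]
  norm_num at h₁ h₂
  linarith
end

section
/- For every f ∈ C[a,b] and partition a = x₀ < ... < xₙ = b, |B_c(f)| ≤ 4 K(f; (1/(96(b-a))) Σ_{i=0}^{n-1} (x_{i+1}-x_i)³), where K(f;t) = inf { ‖f-g‖_∞ + t‖g''‖_∞ : g ∈ C²[a,b] }. -/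
/-!
On a cell `[α, β]` of length `h`, `h` times Bullen's functional is the sum of the trapezoid
defects of the two halves, and for a `C²` function the defect on `[c, d]` is
`∫ (s - c) (d - s) g''(s) ds`, of size at most `‖g''‖ (d - c)³ / 6`; hence
`|bullen g| ≤ h² ‖g''‖ / 24`, while trivially `|bullen u| ≤ 4 ‖u‖`. Splitting `f = (f - g) + g`
on every cell and averaging with weights `hᵢ / (b - a)` gives
`|B_c f| ≤ 4 (‖f - g‖ + t ‖g''‖)` with `t = ∑ hᵢ³ / (96 (b - a))` for every `C²` function `g`,
and the infimum over `g` is the `K`-functional.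
-/

open Set intervalIntegral

open MeasureTheory

namespace IsC2On

variable {a b : ℝ} {g g' g'' : ℝ → ℝ}

lemma mono (h : IsC2On a b g g' g'') {c d : ℝ} (hac : a ≤ c) (hdb : d ≤ b) :
    IsC2On c d g g' g'' :=
  have hsub : Icc c d ⊆ Icc a b := Icc_subset_Icc hac hdb
  ⟨fun y hy => (h.1 y (hsub hy)).mono hsub, fun y hy => (h.2.1 y (hsub hy)).mono hsub,
    h.2.2.mono hsub⟩

lemma continuousOn (h : IsC2On a b g g' g'') : ContinuousOn g (Icc a b) :=
  fun y hy => (h.1 y hy).continuousWithinAt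

lemma continuousOn_deriv (h : IsC2On a b g g' g'') : ContinuousOn g' (Icc a b) :=
  fun y hy => (h.2.1 y hy).continuousWithinAt

end IsC2On

/-- Twice the error of the trapezoid rule on `[c, d]`. -/
noncomputable def trapezoidDefect (c d : ℝ) (g : ℝ → ℝ) : ℝ :=
  (d - c) * (g c + g d) - 2 * ∫ s in c..d, g s

section TrapezoidDefect

variable {c d : ℝ} {g g' g'' : ℝ → ℝ}

-- Integrate by parts twice; the kernel `(s - c) * (d - s)` vanishes at both ends.
lemma trapezoidDefect_eq_integral (hg : IsC2On c d g g' g'') (hcd : c ≤ d) :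
    trapezoidDefect c d g = ∫ s in c..d, (s - c) * (d - s) * g'' s := by
  have hgc' := hg.continuousOn_deriv
  obtain ⟨hg₁, hg₂, hg₃⟩ := hg
  rw [← uIcc_of_le hcd] at hg₁ hg₂ hg₃ hgc'
  have hp (s : ℝ) : HasDerivWithinAt (fun s => (s - c) * (d - s)) (c + d - 2 * s) (uIcc c d) s :=
    (((hasDerivAt_id s).sub_const c).mul ((hasDerivAt_const s d).sub (hasDerivAt_id s))
      |>.congr_deriv (by simp; ring)).hasDerivWithinAt
  have hq (s : ℝ) : HasDerivWithinAt (fun s => c + d - 2 * s) (-2) (uIcc c d) s :=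
    ((hasDerivAt_const s (c + d)).sub ((hasDerivAt_id s).const_mul 2)
      |>.congr_deriv (by simp)).hasDerivWithinAt
  have hp' : IntervalIntegrable (fun s => c + d - 2 * s) volume c d := by
    apply Continuous.intervalIntegrable; fun_prop
  rw [intervalIntegral.integral_mul_deriv_eq_deriv_mul_of_hasDerivWithinAt (fun s _ => hp s) hg₂
      hp' hg₃.intervalIntegrable,
    intervalIntegral.integral_mul_deriv_eq_deriv_mul_of_hasDerivWithinAt (fun s _ => hq s) hg₁
      intervalIntegrable_const hgc'.intervalIntegrable, intervalIntegral.integral_const_mul,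
    trapezoidDefect]
  ring

lemma integral_sub_mul_sub (c d : ℝ) : ∫ s in c..d, (s - c) * (d - s) = (d - c) ^ 3 / 6 := by
  have h (s : ℝ) : (s - c) * (d - s) = (c + d) * s - s ^ 2 - c * d := by ring
  simp_rw [h]
  rw [intervalIntegral.integral_sub, intervalIntegral.integral_sub,
    intervalIntegral.integral_const_mul,
    integral_id, integral_pow, intervalIntegral.integral_const]
  · simp only [smul_eq_mul]; ring
  all_goals first
    | exact intervalIntegrable_const
    | apply Continuous.intervalIntegrable; fun_prop

lemma abs_trapezoidDefect_le (hg : IsC2On c d g g' g'') (hcd : c ≤ d) {M : ℝ}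
    (hM : ∀ y ∈ Icc c d, |g'' y| ≤ M) :
    |trapezoidDefect c d g| ≤ M * (d - c) ^ 3 / 6 := by
  have hkernel : ∀ s ∈ Icc c d, 0 ≤ (s - c) * (d - s) := fun s hs =>
    mul_nonneg (sub_nonneg.2 hs.1) (sub_nonneg.2 hs.2)
  rw [trapezoidDefect_eq_integral hg hcd]
  calc |∫ s in c..d, (s - c) * (d - s) * g'' s|
      ≤ ∫ s in c..d, |(s - c) * (d - s) * g'' s| :=
        intervalIntegral.abs_integral_le_integral_abs hcd
    _ ≤ ∫ s in c..d, (s - c) * (d - s) * M := by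
        apply intervalIntegral.integral_mono_on hcd
        · apply ContinuousOn.intervalIntegrable
          rw [uIcc_of_le hcd]
          exact (ContinuousOn.mul (by fun_prop) hg.2.2).abs
        · apply Continuous.intervalIntegrable; fun_prop
        · intro s hs
          rw [abs_mul, abs_of_nonneg (hkernel s hs)]
          exact mul_le_mul_of_nonneg_left (hM s hs) (hkernel s hs)
    _ = M * (d - c) ^ 3 / 6 := by
        rw [intervalIntegral.integral_mul_const, integral_sub_mul_sub]; ring

end TrapezoidDefect

section Bullen

variable {α β : ℝ}

lemma sub_mul_bullen_eq (hαβ : α < β) {g : ℝ → ℝ} (hg : ContinuousOn g (Icc α β)) :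
    (β - α) * bullen α β g =
      trapezoidDefect α ((α + β) / 2) g + trapezoidDefect ((α + β) / 2) β g := by
  have hm : (α + β) / 2 ∈ Icc α β := ⟨by linarith, by linarith⟩
  have hint (c d : ℝ) (hc : c ∈ Icc α β) (hd : d ∈ Icc α β) : IntervalIntegrable g volume c d :=
    (hg.mono (uIcc_subset_Icc hc hd)).intervalIntegrable
  have hαm := hint α _ (left_mem_Icc.2 hαβ.le) hm
  have hmβ := hint _ β hm (right_mem_Icc.2 hαβ.le)
  rw [bullen, trapezoidDefect, trapezoidDefect,
    ← intervalIntegral.integral_add_adjacent_intervals hαm hmβ]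
  field_simp [(sub_pos.2 hαβ).ne']
  ring

lemma abs_bullen_le_of_isC2On {g g' g'' : ℝ → ℝ} (hg : IsC2On α β g g' g'') (hαβ : α < β)
    {M : ℝ} (hM : ∀ y ∈ Icc α β, |g'' y| ≤ M) :
    |bullen α β g| ≤ (β - α) ^ 2 / 24 * M := by
  have hαm : α ≤ (α + β) / 2 := by linarith
  have hmβ : (α + β) / 2 ≤ β := by linarith
  set m := (α + β) / 2
  have h₁ := abs_trapezoidDefect_le (hg.mono le_rfl hmβ) hαm fun y hy =>
    hM y ⟨hy.1, hy.2.trans hmβ⟩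
  have h₂ := abs_trapezoidDefect_le (hg.mono hαm le_rfl) hmβ fun y hy =>
    hM y ⟨hαm.trans hy.1, hy.2⟩
  have hlen : 0 < β - α := sub_pos.2 hαβ
  have key : (β - α) * |bullen α β g| ≤ (β - α) * ((β - α) ^ 2 / 24 * M) :=
    calc (β - α) * |bullen α β g|
        = |trapezoidDefect α m g + trapezoidDefect m β g| := by
          rw [← sub_mul_bullen_eq hαβ hg.continuousOn, abs_mul, abs_of_pos hlen]
      _ ≤ M * (m - α) ^ 3 / 6 + M * (β - m) ^ 3 / 6 := (abs_add_le _ _).trans (add_le_add h₁ h₂)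
      _ = (β - α) * ((β - α) ^ 2 / 24 * M) := by ring
  exact le_of_mul_le_mul_left key hlen

lemma abs_bullen_le_of_abs_le (hαβ : α < β) {u : ℝ → ℝ} {C : ℝ}
    (hC : ∀ y ∈ Icc α β, |u y| ≤ C) :
    |bullen α β u| ≤ 4 * C := by
  have hlen : 0 < β - α := sub_pos.2 hαβ
  have hint : |2 / (β - α) * ∫ t in α..β, u t| ≤ 2 * C := by
    have h := intervalIntegral.norm_integral_le_of_norm_le_const (f := u) (C := C)
      fun y hy => (hC y (Ioc_subset_Icc_self ((uIoc_of_le hαβ.le) ▸ hy)) :)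
    rw [Real.norm_eq_abs, abs_of_pos hlen] at h
    rw [abs_mul, abs_of_pos (div_pos two_pos hlen)]
    calc 2 / (β - α) * |∫ t in α..β, u t| ≤ 2 / (β - α) * (C * (β - α)) := by gcongr
      _ = 2 * C := by field_simp
  have hα := hC α (left_mem_Icc.2 hαβ.le)
  have hβ := hC β (right_mem_Icc.2 hαβ.le)
  have hm := hC ((α + β) / 2) ⟨by linarith, by linarith⟩
  rw [bullen]
  calc |(u α + u β) / 2 + u ((α + β) / 2) - 2 / (β - α) * ∫ t in α..β, u t|
      ≤ |u α| / 2 + |u β| / 2 + |u ((α + β) / 2)| + |2 / (β - α) * ∫ t in α..β, u t| := by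
        have := abs_add_le (u α) (u β)
        have := abs_add_le ((u α + u β) / 2) (u ((α + β) / 2))
        have := abs_sub ((u α + u β) / 2 + u ((α + β) / 2)) (2 / (β - α) * ∫ t in α..β, u t)
        rw [abs_div, abs_two] at *
        linarith
    _ ≤ 4 * C := by linarith

lemma bullen_sub {u v : ℝ → ℝ} (hu : IntervalIntegrable u volume α β)
    (hv : IntervalIntegrable v volume α β) :
    bullen α β (fun y => u y - v y) = bullen α β u - bullen α β v := by
  simp only [bullen, intervalIntegral.integral_sub hu hv]
  ring

lemma abs_bullen_le_of_approx (hαβ : α < β) {f g g' g'' : ℝ → ℝ}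
    (hf : ContinuousOn f (Icc α β)) (hg : IsC2On α β g g' g'') {E M : ℝ}
    (hE : ∀ y ∈ Icc α β, |f y - g y| ≤ E) (hM : ∀ y ∈ Icc α β, |g'' y| ≤ M) :
    |bullen α β f| ≤ 4 * E + (β - α) ^ 2 / 24 * M := by
  have hsplit : bullen α β f = bullen α β (fun y => f y - g y) + bullen α β g := by
    rw [bullen_sub (hf.intervalIntegrable_of_Icc hαβ.le)
      (hg.continuousOn.intervalIntegrable_of_Icc hαβ.le), sub_add_cancel]
  rw [hsplit]
  exact (abs_add_le _ _).trans
    (add_le_add (abs_bullen_le_of_abs_le hαβ hE) (abs_bullen_le_of_isC2On hg hαβ hM))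

end Bullen

lemma abs_le_supOn {a b : ℝ} {u : ℝ → ℝ} (hu : ContinuousOn u (Icc a b)) :
    ∀ y ∈ Icc a b, |u y| ≤ supOn a b u := by
  obtain ⟨C, hC⟩ := isCompact_Icc.exists_bound_of_continuousOn hu
  intro y hy
  refine le_ciSup (f := fun y : Icc a b => |u y|) ⟨C, ?_⟩ ⟨y, hy⟩
  rintro _ ⟨z, rfl⟩
  exact hC z z.2

lemma le_KF {a b t c : ℝ} {f : ℝ → ℝ}
    (h : ∀ g g' g'', IsC2On a b g g' g'' → c ≤ supOn a b (fun y => f y - g y) + t * supOn a b g'') :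
    c ≤ KF a b t f := by
  refine le_csInf ?_ fun v ⟨g, g', g'', hg, hv⟩ => hv ▸ h g g' g'' hg
  exact ⟨_, 0, 0, 0, ⟨fun y _ => hasDerivWithinAt_const y _ 0,
    fun y _ => hasDerivWithinAt_const y _ 0, continuousOn_const⟩, rfl⟩

section Partition

variable {a b : ℝ} {n : ℕ} {x : ℕ → ℝ}

lemma mem_Icc_of_partition (hx0 : x 0 = a) (hxn : x n = b) (hmono : ∀ i < n, x i < x (i + 1)) :
    ∀ i ≤ n, x i ∈ Icc a b := by
  have hx : MonotoneOn x (Iic n) := (strictMonoOn_Iic_of_lt_succ hmono).monotoneOn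
  exact fun i hi => ⟨hx0 ▸ hx (Nat.zero_le n) hi (Nat.zero_le i), hxn ▸ hx hi (mem_Iic.2 le_rfl) hi⟩

lemma abs_bullenC_le (hab : a ≤ b) (hmono : ∀ i < n, x i < x (i + 1)) {u : ℝ → ℝ} {B : ℕ → ℝ}
    (hB : ∀ i < n, |bullen (x i) (x (i + 1)) u| ≤ B i) :
    |bullenC a b n x u| ≤ 1 / (b - a) * ∑ i ∈ Finset.range n, (x (i + 1) - x i) * B i := by
  have hbullenC : bullenC a b n x u =
      1 / (b - a) * ∑ i ∈ Finset.range n, (x (i + 1) - x i) * bullen (x i) (x (i + 1)) u := rfl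
  rw [hbullenC, abs_mul, abs_of_nonneg (one_div_nonneg.2 (sub_nonneg.2 hab))]
  gcongr
  refine (Finset.abs_sum_le_sum_abs _ _).trans (Finset.sum_le_sum fun i hi => ?_)
  have hi := Finset.mem_range.1 hi
  have hlen : 0 < x (i + 1) - x i := sub_pos.2 (hmono i hi)
  rw [abs_mul, abs_of_pos hlen]
  exact mul_le_mul_of_nonneg_left (hB i hi) hlen.le

end Partition

theorem stmt8 (a b : ℝ) (hab : a < b) (n : ℕ) (x : ℕ → ℝ)
    (hx0 : x 0 = a) (hxn : x n = b)
    (hmono : ∀ i < n, x i < x (i + 1))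
    (f : ℝ → ℝ) (hf : ContinuousOn f (Set.Icc a b)) :
    |bullenC a b n x f| ≤
      4 * KF a b ((1 / (96 * (b - a))) * ∑ i ∈ Finset.range n, (x (i + 1) - x i) ^ 3) f := by
  have hx := mem_Icc_of_partition hx0 hxn hmono
  have hlen : ∑ i ∈ Finset.range n, (x (i + 1) - x i) = b - a := by
    rw [Finset.sum_range_sub x, hx0, hxn]
  rw [← div_le_iff₀' four_pos]
  refine le_KF fun g g' g'' hg => ?_
  set E := supOn a b (fun y => f y - g y)
  set M := supOn a b g''
  have hE := abs_le_supOn (hf.sub hg.continuousOn)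
  have hM := abs_le_supOn hg.2.2
  have hloc (i : ℕ) (hi : i < n) :
      |bullen (x i) (x (i + 1)) f| ≤ 4 * E + (x (i + 1) - x i) ^ 2 / 24 * M := by
    have hxi := (hx i hi.le).1
    have hxi' := (hx (i + 1) hi).2
    have hsub := Icc_subset_Icc hxi hxi'
    exact abs_bullen_le_of_approx (hmono i hi) (hf.mono hsub) (hg.mono hxi hxi')
      (fun y hy => hE y (hsub hy)) (fun y hy => hM y (hsub hy))
  have hsum : ∑ i ∈ Finset.range n, (x (i + 1) - x i) * (4 * E + (x (i + 1) - x i) ^ 2 / 24 * M)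
      = (b - a) * (4 * E) + (∑ i ∈ Finset.range n, (x (i + 1) - x i) ^ 3) * (M / 24) := by
    rw [← hlen, Finset.sum_mul, Finset.sum_mul, ← Finset.sum_add_distrib]
    exact Finset.sum_congr rfl fun i _ => by ring
  calc |bullenC a b n x f| / 4
      ≤ 1 / (b - a) * ((b - a) * (4 * E) +
          (∑ i ∈ Finset.range n, (x (i + 1) - x i) ^ 3) * (M / 24)) / 4 := by
        rw [← hsum]; gcongr; exact abs_bullenC_le hab.le hmono hloc
    _ = E + (1 / (96 * (b - a))) * (∑ i ∈ Finset.range n, (x (i + 1) - x i) ^ 3) * M := by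
        field_simp [(sub_pos.2 hab).ne']
        ring
end

section
/- Suppose H : C[a,b] → F, with F a normed space, satisfies: (a) ‖H(f+g)‖ ≤ γ(‖Hf‖+‖Hg‖) for all f,g ∈ C[a,b]; (b) ‖Hf‖ ≤ α‖f‖_∞ for all f ∈ C[a,b]; (c) ‖Hg‖ ≤ β₀‖g‖_∞ + β₁‖g'‖_∞ + β₂‖g''‖_∞ for all g ∈ C²[a,b]. Then for all f ∈ C[a,b] and 0 < h ≤ (b-a)/2: ‖Hf‖ ≤ γ{ β₀‖f‖_∞ + (2β₁/h) ω₁(f;h) + (3/4)(α + β₀ + 2β₁/h + 2β₂/h²) ω₂(f;h) }, where ω₁ and ω₂ are the first and second moduli of smoothness on [a,b]. -/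
/-!
Splitting `f = (f - g) + g` with `g ∈ C²`, hypotheses (a)–(c) bound `‖H f‖` by
`γ (α ‖f - g‖ + β₀ ‖g‖ + β₁ ‖g'‖ + β₂ ‖g''‖)`, so it suffices to find `g` with
`‖f - g‖ ≤ 3/4 ω₂`, `‖g'‖ ≤ (2 ω₁ + 3/2 ω₂) / h` and `‖g''‖ ≤ 3/2 ω₂ / h²`, up to an arbitrarily
small error (Zhuk's lemma).

By Whitney's theorem for lines, `f` is within `ω₂(f; h) / 2` of a line on `[a, a + 2h]` and on
`[b - 2h, b]`: any three points admit such a line (shift the chord through the outer two), and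
Helly's theorem in the plane of lines, with compactness, passes to all points. Extending `f` by
these lines, blended into `f` near the endpoints to stay continuous, gives `E` whose second
differences of step `≤ h` centred in `[a, b]` are at most `3/2 ω₂` up to the error. The
second-order Steklov mean `g` of `E` with step `h` then has `g'' = Δ²_h E / h²`, and the bounds
follow by integrating the second differences.
-/

open Set intervalIntegral

def centralDiff2 (f : ℝ → ℝ) (t x : ℝ) : ℝ := f (x + t) - 2 * f x + f (x - t)

section Moduli

variable {a b s : ℝ} {f : ℝ → ℝ}

lemma bddAbove_omega1_set (hf : ContinuousOn f (Icc a b)) :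
    BddAbove {v : ℝ | ∃ x ∈ Icc a b, ∃ y ∈ Icc a b, |x - y| ≤ s ∧ v = |f x - f y|} := by
  obtain ⟨C, hC⟩ := isCompact_Icc.exists_bound_of_continuousOn hf
  refine ⟨C + C, ?_⟩
  rintro _ ⟨x, hx, y, hy, -, rfl⟩
  exact (abs_sub _ _).trans (add_le_add (hC x hx) (hC y hy))

lemma bddAbove_omega2_set (hf : ContinuousOn f (Icc a b)) :
    BddAbove {v : ℝ | ∃ x t : ℝ, 0 ≤ t ∧ t ≤ s ∧ x - t ∈ Icc a b ∧ x + t ∈ Icc a b ∧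
      v = |f (x + t) - 2 * f x + f (x - t)|} := by
  obtain ⟨C, hC⟩ := isCompact_Icc.exists_bound_of_continuousOn hf
  refine ⟨4 * C, ?_⟩
  rintro _ ⟨x, t, ht, -, hm, hp, rfl⟩
  have h₁ := abs_le.1 (hC _ hp)
  have h₂ := abs_le.1 (hC x ⟨by linarith [hm.1], by linarith [hp.2]⟩)
  have h₃ := abs_le.1 (hC _ hm)
  rw [abs_le]
  constructor <;> linarith

lemma abs_sub_le_omega1 (hf : ContinuousOn f (Icc a b)) {x y : ℝ} (hx : x ∈ Icc a b)
    (hy : y ∈ Icc a b) (hxy : |x - y| ≤ s) : |f x - f y| ≤ omega1 a b f s :=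
  le_csSup (bddAbove_omega1_set hf) ⟨x, hx, y, hy, hxy, rfl⟩

lemma abs_centralDiff2_le_omega2 (hf : ContinuousOn f (Icc a b)) {x t : ℝ} (ht : 0 ≤ t)
    (hts : t ≤ s) (hxa : a ≤ x - t) (hxb : x + t ≤ b) :
    |centralDiff2 f t x| ≤ omega2 a b f s :=
  le_csSup (bddAbove_omega2_set hf) ⟨x, t, ht, hts, ⟨hxa, by linarith⟩, ⟨by linarith, hxb⟩, rfl⟩

lemma supOn_le (hab : a ≤ b) {M : ℝ} (h : ∀ x ∈ Icc a b, |f x| ≤ M) : supOn a b f ≤ M :=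
  have : Nonempty (Icc a b) := ⟨⟨a, left_mem_Icc.2 hab⟩⟩
  ciSup_le fun x => h x x.2

lemma abs_le_supOn_s16 (hf : ContinuousOn f (Icc a b)) {x : ℝ} (hx : x ∈ Icc a b) :
    |f x| ≤ supOn a b f := by
  obtain ⟨C, hC⟩ := isCompact_Icc.exists_bound_of_continuousOn hf
  exact le_ciSup (f := fun y : Icc a b => |f y|) ⟨C, by rintro _ ⟨y, rfl⟩; exact hC y y.2⟩ ⟨x, hx⟩

end Moduli

section Whitney

variable {f : ℝ → ℝ} {p q ω : ℝ}

lemma abs_le_of_abs_centralDiff2_le (hpq : p ≤ q) (hf : ContinuousOn f (Icc p q))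
    (hp : f p = 0) (hq : f q = 0)
    (hω : ∀ x t, 0 ≤ t → p ≤ x - t → x + t ≤ q → |centralDiff2 f t x| ≤ ω) :
    ∀ w ∈ Icc p q, |f w| ≤ ω := by
  obtain ⟨z, hz, hmax⟩ := isCompact_Icc.exists_isMaxOn (nonempty_Icc.2 hpq) hf.abs
  have hle : ∀ y ∈ Icc p q, |f y| ≤ |f z| := fun y hy => hmax hy
  set t := min (z - p) (q - z)
  have htp : t ≤ z - p := min_le_left _ _
  have htq : t ≤ q - z := min_le_right _ _
  -- one of `z ± t` is an endpoint, where `f` vanishes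
  have hends : |f (z + t) + f (z - t)| ≤ |f z| := by
    rcases min_choice (z - p) (q - z) with h | h
    · rw [show t = z - p from h, sub_sub_cancel, hp, add_zero]
      exact hle _ ⟨by linarith [hz.1], by linarith⟩
    · rw [show t = q - z from h, add_sub_cancel, hq, zero_add]
      exact hle _ ⟨by linarith, by linarith [hz.2]⟩
  have hcd := hω z t (le_min (by linarith [hz.1]) (by linarith [hz.2])) (by linarith) (by linarith)
  have htwice : 2 * f z = (f (z + t) + f (z - t)) - centralDiff2 f t z := by
    unfold centralDiff2; ring
  have := abs_sub (f (z + t) + f (z - t)) (centralDiff2 f t z)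
  rw [← htwice, abs_mul, abs_two] at this
  intro w hw
  linarith [hle w hw]

noncomputable def chord (f : ℝ → ℝ) (p q y : ℝ) : ℝ := f p + (y - p) * ((f q - f p) / (q - p))

lemma chord_left : chord f p q p = f p := by simp [chord]

lemma chord_right : chord f p q q = f q := by
  rcases eq_or_ne q p with rfl | h
  · exact chord_left
  · rw [chord, mul_div_cancel₀ _ (sub_ne_zero.2 h), add_sub_cancel]

lemma abs_sub_chord_le (hpq : p ≤ q) (hf : ContinuousOn f (Icc p q))
    (hω : ∀ x t, 0 ≤ t → p ≤ x - t → x + t ≤ q → |centralDiff2 f t x| ≤ ω) :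
    ∀ w ∈ Icc p q, |f w - chord f p q w| ≤ ω := by
  refine abs_le_of_abs_centralDiff2_le hpq (hf.sub (by unfold chord; fun_prop))
    (by rw [chord_left, sub_self]) (by rw [chord_right, sub_self]) fun x t ht hxp hxq => ?_
  convert hω x t ht hxp hxq using 2
  unfold centralDiff2 chord
  ring

end Whitney

section LineBand

variable {f : ℝ → ℝ} {r c e ω : ℝ}

def lineBand (f : ℝ → ℝ) (r x : ℝ) : Set (ℝ × ℝ) := {w | |f x - (w.1 + w.2 * x)| ≤ r}

lemma lineBand_eq_preimage (x : ℝ) :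
    lineBand f r x = (fun w : ℝ × ℝ => w.1 + w.2 * x) ⁻¹' Icc (f x - r) (f x + r) := by
  ext w
  simp only [lineBand, mem_ofPred_eq, mem_preimage, mem_Icc, abs_le]
  constructor <;> rintro ⟨h₁, h₂⟩ <;> constructor <;> linarith

lemma convex_lineBand (x : ℝ) : Convex ℝ (lineBand f r x) := by
  rw [lineBand_eq_preimage]
  exact (convex_Icc _ _).is_linear_preimage
    ⟨fun _ _ => by simp only [Prod.fst_add, Prod.snd_add]; ring,
      fun _ _ => by simp only [Prod.smul_fst, Prod.smul_snd, smul_eq_mul]; ring⟩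

lemma isClosed_lineBand (x : ℝ) : IsClosed (lineBand f r x) := by
  rw [lineBand_eq_preimage]
  exact isClosed_Icc.preimage (by fun_prop)

lemma isCompact_lineBand_inter (hce : c ≠ e) : IsCompact (lineBand f r c ∩ lineBand f r e) := by
  -- a line is determined by its values at `c` and `e`, which range over compact intervals
  let Φ : ℝ × ℝ → ℝ × ℝ := fun y => ((y.1 * e - y.2 * c) / (e - c), (y.2 - y.1) / (e - c))
  have hbox : IsCompact (Icc (f c - r) (f c + r) ×ˢ Icc (f e - r) (f e + r)) :=
    isCompact_Icc.prod isCompact_Icc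
  refine (hbox.image (by fun_prop : Continuous Φ)).of_isClosed_subset
    ((isClosed_lineBand c).inter (isClosed_lineBand e)) ?_
  rintro w ⟨hc, he⟩
  rw [lineBand_eq_preimage] at hc he
  refine ⟨(w.1 + w.2 * c, w.1 + w.2 * e), ⟨hc, he⟩, ?_⟩
  have : e - c ≠ 0 := sub_ne_zero.2 hce.symm
  ext <;> simp only [Φ] <;> field_simp <;> ring

lemma exists_mem_lineBand_of_le_of_le (hf : ContinuousOn f (Icc c e))
    (hω : ∀ x t, 0 ≤ t → c ≤ x - t → x + t ≤ e → |centralDiff2 f t x| ≤ ω)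
    {x₁ x₂ x₃ : ℝ} (hc : c ≤ x₁) (h₁₂ : x₁ ≤ x₂) (h₂₃ : x₂ ≤ x₃) (he : x₃ ≤ e) :
    ∃ w, w ∈ lineBand f (ω / 2) x₁ ∧ w ∈ lineBand f (ω / 2) x₂ ∧ w ∈ lineBand f (ω / 2) x₃ := by
  set sl := (f x₃ - f x₁) / (x₃ - x₁)
  set d := f x₂ - chord f x₁ x₃ x₂
  have hd : |d| ≤ ω :=
    abs_sub_chord_le (h₁₂.trans h₂₃) (hf.mono (Icc_subset_Icc hc he))
      (fun x t ht h₁ h₃ => hω x t ht (by linarith) (by linarith)) x₂ ⟨h₁₂, h₂₃⟩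
  -- the chord through `x₁, x₃`, shifted by half its deviation at `x₂`
  have hw : ∀ x, f x - ((f x₁ - sl * x₁ + d / 2) + sl * x) = (f x - chord f x₁ x₃ x) - d / 2 := by
    intro x; unfold chord; ring
  have hd2 : |d / 2| ≤ ω / 2 := by rw [abs_div, abs_two]; linarith
  refine ⟨(f x₁ - sl * x₁ + d / 2, sl), ?_, ?_, ?_⟩ <;> simp only [lineBand, mem_ofPred_eq, hw]
  · rwa [chord_left, sub_self, zero_sub, abs_neg]
  · rwa [sub_half]
  · rwa [chord_right, sub_self, zero_sub, abs_neg]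

lemma exists_mem_lineBand_three (hf : ContinuousOn f (Icc c e))
    (hω : ∀ x t, 0 ≤ t → c ≤ x - t → x + t ≤ e → |centralDiff2 f t x| ≤ ω)
    {x₁ x₂ x₃ : ℝ} (h₁ : x₁ ∈ Icc c e) (h₂ : x₂ ∈ Icc c e) (h₃ : x₃ ∈ Icc c e) :
    ∃ w, w ∈ lineBand f (ω / 2) x₁ ∧ w ∈ lineBand f (ω / 2) x₂ ∧ w ∈ lineBand f (ω / 2) x₃ := by
  wlog h₁₃ : x₁ ≤ x₃ generalizing x₁ x₃
  · obtain ⟨w, hw₃, hw₂, hw₁⟩ := this h₃ h₁ (le_of_not_ge h₁₃)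
    exact ⟨w, hw₁, hw₂, hw₃⟩
  rcases lt_or_ge x₂ x₁ with h₂₁ | h₁₂
  · obtain ⟨w, hw₂, hw₁, hw₃⟩ := exists_mem_lineBand_of_le_of_le hf hω h₂.1 h₂₁.le h₁₃ h₃.2
    exact ⟨w, hw₁, hw₂, hw₃⟩
  rcases le_or_gt x₂ x₃ with h₂₃ | h₃₂
  · exact exists_mem_lineBand_of_le_of_le hf hω h₁.1 h₁₂ h₂₃ h₃.2
  · obtain ⟨w, hw₁, hw₃, hw₂⟩ := exists_mem_lineBand_of_le_of_le hf hω h₁.1 h₁₃ h₃₂.le h₂.2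
    exact ⟨w, hw₁, hw₂, hw₃⟩

lemma Finset.exists_subset_triple {α : Type*} [DecidableEq α] {s : Finset α} (hs : s.Nonempty)
    (h : s.card ≤ 3) : ∃ x ∈ s, ∃ y ∈ s, ∃ z ∈ s, s ⊆ {x, y, z} := by
  obtain h₁ | h₂ | h₃ : s.card = 1 ∨ s.card = 2 ∨ s.card = 3 := by have := hs.card_pos; omega
  · obtain ⟨x, rfl⟩ := Finset.card_eq_one.1 h₁
    exact ⟨x, by simp, x, by simp, x, by simp, by simp⟩
  · obtain ⟨x, y, -, rfl⟩ := Finset.card_eq_two.1 h₂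
    exact ⟨x, by simp, y, by simp, y, by simp, by simp⟩
  · obtain ⟨x, y, z, -, -, -, rfl⟩ := Finset.card_eq_three.1 h₃
    exact ⟨x, by simp, y, by simp, z, by simp, subset_rfl⟩

lemma nonempty_biInter_lineBand (hf : ContinuousOn f (Icc c e))
    (hω : ∀ x t, 0 ≤ t → c ≤ x - t → x + t ≤ e → |centralDiff2 f t x| ≤ ω)
    (J : Finset ℝ) (hJ : ↑J ⊆ Icc c e) : (⋂ x ∈ J, lineBand f (ω / 2) x).Nonempty := by
  refine Convex.helly_theorem' (fun x _ => convex_lineBand x) fun I hIJ hI => ?_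
  rcases I.eq_empty_or_nonempty with rfl | hne
  · simp
  rw [Module.finrank_prod, Module.finrank_self] at hI
  obtain ⟨x₁, h₁, x₂, h₂, x₃, h₃, hsub⟩ := Finset.exists_subset_triple hne hI
  have hIce : ∀ x ∈ I, x ∈ Icc c e := fun x hx => hJ (hIJ hx)
  obtain ⟨w, hw₁, hw₂, hw₃⟩ := exists_mem_lineBand_three hf hω (hIce _ h₁) (hIce _ h₂) (hIce _ h₃)
  refine ⟨w, mem_iInter₂.2 fun x hx => ?_⟩
  rcases Finset.mem_insert.1 (hsub hx) with rfl | hx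
  · exact hw₁
  rcases Finset.mem_insert.1 hx with rfl | hx
  · exact hw₂
  rwa [Finset.mem_singleton.1 hx]

theorem exists_affine_approx (hce : c < e) (hf : ContinuousOn f (Icc c e))
    (hω : ∀ x t, 0 ≤ t → c ≤ x - t → x + t ≤ e → |centralDiff2 f t x| ≤ ω) :
    ∃ u v : ℝ, ∀ x ∈ Icc c e, |f x - (u + v * x)| ≤ ω / 2 := by
  obtain ⟨w, -, hw⟩ : (lineBand f (ω / 2) c ∩ lineBand f (ω / 2) e ∩
      ⋂ x : Icc c e, lineBand f (ω / 2) x).Nonempty := by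
    refine (isCompact_lineBand_inter hce.ne).inter_iInter_nonempty _
      (fun x => isClosed_lineBand x) fun I => ?_
    classical
    obtain ⟨w, hw⟩ := nonempty_biInter_lineBand hf hω (insert c (insert e (I.image (↑)))) (by
      intro y hy
      simp only [Finset.coe_insert, Finset.coe_image, mem_insert_iff, mem_image] at hy
      rcases hy with rfl | rfl | ⟨z, -, rfl⟩
      exacts [left_mem_Icc.2 hce.le, right_mem_Icc.2 hce.le, z.2])
    simp only [Finset.mem_insert, Finset.mem_image, mem_iInter₂] at hw
    exact ⟨w, ⟨hw c (.inl rfl), hw e (.inr (.inl rfl))⟩,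
      mem_iInter₂.2 fun i hi => hw i (.inr (.inr ⟨i, hi, rfl⟩))⟩
  exact ⟨w.1, w.2, fun x hx => mem_iInter.1 hw ⟨x, hx⟩⟩

end LineBand

lemma abs_convexComb_le {l A B M : ℝ} (hl₀ : 0 ≤ l) (hl₁ : l ≤ 1) (hA : |A| ≤ M)
    (hB : l < 1 → |B| ≤ M) : |l * A + (1 - l) * B| ≤ M := by
  rcases hl₁.lt_or_eq with hl | rfl
  · calc |l * A + (1 - l) * B| ≤ |l * A| + |(1 - l) * B| := abs_add_le _ _
      _ = l * |A| + (1 - l) * |B| := by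
          rw [abs_mul, abs_mul, abs_of_nonneg hl₀, abs_of_nonneg (sub_nonneg.2 hl₁)]
      _ ≤ l * M + (1 - l) * M :=
          add_le_add (mul_le_mul_of_nonneg_left hA hl₀)
            (mul_le_mul_of_nonneg_left (hB hl) (sub_nonneg.2 hl₁))
      _ = M := by ring
  · simpa using hA

section Extension

variable {f : ℝ → ℝ} {a b s δ ε ω uL vL uR vR x t : ℝ}

/-- Left of `a` this is a convex combination of the line `uL + vL * y` and its parallel through
`(a, f a)`, the weight of the line rising from `0` at `a` to `1` at `a - δ`; symmetrically right
of `b`. -/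
noncomputable def zhukExt (a b δ uL vL uR vR : ℝ) (f : ℝ → ℝ) (y : ℝ) : ℝ :=
  f (max a (min b y)) + vL * (min y a - a) + min 1 (max 0 ((a - y) / δ)) * (uL + vL * a - f a)
    + vR * (max y b - b) + min 1 (max 0 ((y - b) / δ)) * (uR + vR * b - f b)

lemma continuous_zhukExt (hab : a ≤ b) (hf : ContinuousOn f (Icc a b)) :
    Continuous (zhukExt a b δ uL vL uR vR f) := by
  have : Continuous fun y => f (max a (min b y)) :=
    hf.comp_continuous (by fun_prop) fun y => ⟨le_max_left _ _, max_le hab (min_le_left _ _)⟩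
  unfold zhukExt
  refine (((this.add ?_).add ?_).add ?_).add ?_ <;> fun_prop

lemma zhukExt_of_mem (hδ : 0 < δ) {y : ℝ} (hy : y ∈ Icc a b) :
    zhukExt a b δ uL vL uR vR f y = f y := by
  have h₁ : (a - y) / δ ≤ 0 := div_nonpos_of_nonpos_of_nonneg (by linarith [hy.1]) hδ.le
  have h₂ : (y - b) / δ ≤ 0 := div_nonpos_of_nonpos_of_nonneg (by linarith [hy.2]) hδ.le
  simp [zhukExt, hy.1, hy.2, h₁, h₂]

lemma zhukExt_of_lt (hab : a ≤ b) (hδ : 0 < δ) {y : ℝ} (hy : y < a) :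
    zhukExt a b δ uL vL uR vR f y = min 1 ((a - y) / δ) * (uL + vL * y)
      + (1 - min 1 ((a - y) / δ)) * (f a + vL * (y - a)) := by
  have h₁ : 0 ≤ (a - y) / δ := div_nonneg (by linarith) hδ.le
  have h₂ : (y - b) / δ ≤ 0 := div_nonpos_of_nonpos_of_nonneg (by linarith) hδ.le
  simp only [zhukExt, min_eq_right (hy.le.trans hab), max_eq_left hy.le, min_eq_left hy.le,
    max_eq_right (hy.le.trans hab), max_eq_right h₁, max_eq_left h₂, min_eq_right zero_le_one]
  ring

lemma zhukExt_of_gt (hab : a ≤ b) (hδ : 0 < δ) {y : ℝ} (hy : b < y) :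
    zhukExt a b δ uL vL uR vR f y = min 1 ((y - b) / δ) * (uR + vR * y)
      + (1 - min 1 ((y - b) / δ)) * (f b + vR * (y - b)) := by
  have h₁ : (a - y) / δ ≤ 0 := div_nonpos_of_nonpos_of_nonneg (by linarith) hδ.le
  have h₂ : 0 ≤ (y - b) / δ := div_nonneg (by linarith) hδ.le
  simp only [zhukExt, min_eq_left hy.le, max_eq_right hab, min_eq_right (hab.trans hy.le),
    max_eq_left hy.le, max_eq_left h₁, max_eq_right h₂, min_eq_right zero_le_one]
  ring

lemma abs_centralDiff2_zhukExt_le_of_lt (hs : 2 * s ≤ b - a) (hδ : 0 < δ)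
    (hω : ∀ x t, 0 ≤ t → t ≤ s → a ≤ x - t → x + t ≤ b → |centralDiff2 f t x| ≤ ω)
    (hε : ∀ p ∈ Icc a b, ∀ q ∈ Icc a b, dist p q ≤ δ → dist (f p) (f q) ≤ ε)
    (hL : ∀ x ∈ Icc a (a + 2 * s), |f x - (uL + vL * x)| ≤ ω / 2)
    (hx : x ∈ Icc a b) (ht : 0 ≤ t) (hts : t ≤ s) (hxt : x - t < a) :
    |centralDiff2 (zhukExt a b δ uL vL uR vR f) t x| ≤ 3 / 2 * ω + ε + |vL| * δ := by
  have hab : a ≤ b := by linarith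
  obtain ⟨hax, hxb⟩ := hx
  have hxt' : x + t ≤ b := by linarith
  have hε₀ : 0 ≤ ε := dist_nonneg.trans (hε x ⟨hax, hxb⟩ x ⟨hax, hxb⟩ (by simp [hδ.le]))
  set l := min 1 ((a - (x - t)) / δ)
  have hsplit : centralDiff2 (zhukExt a b δ uL vL uR vR f) t x =
      l * (f (x + t) - 2 * f x + (uL + vL * (x - t)))
        + (1 - l) * (f (x + t) - 2 * f x + (f a + vL * (x - t - a))) := by
    rw [centralDiff2, zhukExt_of_mem hδ ⟨by linarith, hxt'⟩, zhukExt_of_mem hδ ⟨hax, hxb⟩,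
      zhukExt_of_lt hab hδ hxt]
    ring
  rw [hsplit]
  refine abs_convexComb_le (le_min zero_le_one (div_nonneg (by linarith) hδ.le)) (min_le_left _ _)
    ?_ fun hl => ?_
  · -- the line `ℓ` is affine, so this is `(f - ℓ) (x + t) - 2 (f - ℓ) x`
    have h₁ := abs_le.1 (hL (x + t) ⟨by linarith, by linarith⟩)
    have h₂ := abs_le.1 (hL x ⟨hax, by linarith⟩)
    have hδv : 0 ≤ |vL| * δ := by positivity
    rw [abs_le]
    constructor <;> linarith
  · -- `x + r` is the mirror image of `a` in `x`, and it is within `δ` of `x + t`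
    have hgap : a - (x - t) < δ := by
      rw [min_lt_iff, lt_self_iff_false, false_or, div_lt_one hδ] at hl
      exact hl
    set r := x - a
    have h₁ : |f (x + t) - f (x + r)| ≤ ε := by
      rw [← Real.dist_eq]
      exact hε _ ⟨by linarith, hxt'⟩ _ ⟨by linarith, by linarith⟩
        (by rw [Real.dist_eq, abs_of_nonneg (by linarith)]; linarith)
    have h₂ := hω x r (by linarith) (by linarith) (by simp [r]) (by linarith)
    have h₃ : |vL * (x - t - a)| ≤ |vL| * δ := by
      rw [abs_mul, abs_of_neg (by linarith : x - t - a < 0)]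
      exact mul_le_mul_of_nonneg_left (by linarith) (abs_nonneg _)
    have hsum : f (x + t) - 2 * f x + (f a + vL * (x - t - a)) =
        (f (x + t) - f (x + r)) + centralDiff2 f r x + vL * (x - t - a) := by
      simp only [centralDiff2, r]; ring_nf
    rw [hsum]
    linarith [abs_add_three (f (x + t) - f (x + r)) (centralDiff2 f r x) (vL * (x - t - a)),
      abs_nonneg (centralDiff2 f r x)]

lemma abs_centralDiff2_zhukExt_le_of_gt (hs : 2 * s ≤ b - a) (hδ : 0 < δ)
    (hω : ∀ x t, 0 ≤ t → t ≤ s → a ≤ x - t → x + t ≤ b → |centralDiff2 f t x| ≤ ω)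
    (hε : ∀ p ∈ Icc a b, ∀ q ∈ Icc a b, dist p q ≤ δ → dist (f p) (f q) ≤ ε)
    (hR : ∀ x ∈ Icc (b - 2 * s) b, |f x - (uR + vR * x)| ≤ ω / 2)
    (hx : x ∈ Icc a b) (ht : 0 ≤ t) (hts : t ≤ s) (hxt : b < x + t) :
    |centralDiff2 (zhukExt a b δ uL vL uR vR f) t x| ≤ 3 / 2 * ω + ε + |vR| * δ := by
  have hab : a ≤ b := by linarith
  obtain ⟨hax, hxb⟩ := hx
  have hxt' : a ≤ x - t := by linarith
  have hε₀ : 0 ≤ ε := dist_nonneg.trans (hε x ⟨hax, hxb⟩ x ⟨hax, hxb⟩ (by simp [hδ.le]))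
  set l := min 1 ((x + t - b) / δ)
  have hsplit : centralDiff2 (zhukExt a b δ uL vL uR vR f) t x =
      l * (uR + vR * (x + t) - 2 * f x + f (x - t))
        + (1 - l) * (f b + vR * (x + t - b) - 2 * f x + f (x - t)) := by
    rw [centralDiff2, zhukExt_of_mem hδ ⟨hxt', by linarith⟩, zhukExt_of_mem hδ ⟨hax, hxb⟩,
      zhukExt_of_gt hab hδ hxt]
    ring
  rw [hsplit]
  refine abs_convexComb_le (le_min zero_le_one (div_nonneg (by linarith) hδ.le)) (min_le_left _ _)
    ?_ fun hl => ?_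
  · have h₁ := abs_le.1 (hR (x - t) ⟨by linarith, by linarith⟩)
    have h₂ := abs_le.1 (hR x ⟨by linarith, hxb⟩)
    have hδv : 0 ≤ |vR| * δ := by positivity
    rw [abs_le]
    constructor <;> linarith
  · have hgap : x + t - b < δ := by
      rw [min_lt_iff, lt_self_iff_false, false_or, div_lt_one hδ] at hl
      exact hl
    set r := b - x
    have h₁ : |f (x - t) - f (x - r)| ≤ ε := by
      rw [← Real.dist_eq]
      exact hε _ ⟨hxt', by linarith⟩ _ ⟨by linarith, by linarith⟩
        (by rw [Real.dist_eq, abs_of_nonpos (by linarith)]; linarith)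
    have h₂ := hω x r (by linarith) (by linarith) (by linarith) (by simp [r])
    have h₃ : |vR * (x + t - b)| ≤ |vR| * δ := by
      rw [abs_mul, abs_of_pos (by linarith : 0 < x + t - b)]
      exact mul_le_mul_of_nonneg_left hgap.le (abs_nonneg _)
    have hsum : f b + vR * (x + t - b) - 2 * f x + f (x - t) =
        (f (x - t) - f (x - r)) + centralDiff2 f r x + vR * (x + t - b) := by
      simp only [centralDiff2, r]; ring_nf
    rw [hsum]
    linarith [abs_add_three (f (x - t) - f (x - r)) (centralDiff2 f r x) (vR * (x + t - b)),
      abs_nonneg (centralDiff2 f r x)]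

lemma abs_centralDiff2_zhukExt_le (hs : 2 * s ≤ b - a) (hδ : 0 < δ)
    (hω : ∀ x t, 0 ≤ t → t ≤ s → a ≤ x - t → x + t ≤ b → |centralDiff2 f t x| ≤ ω)
    (hε : ∀ p ∈ Icc a b, ∀ q ∈ Icc a b, dist p q ≤ δ → dist (f p) (f q) ≤ ε)
    (hL : ∀ x ∈ Icc a (a + 2 * s), |f x - (uL + vL * x)| ≤ ω / 2)
    (hR : ∀ x ∈ Icc (b - 2 * s) b, |f x - (uR + vR * x)| ≤ ω / 2)
    (hx : x ∈ Icc a b) (ht : 0 ≤ t) (hts : t ≤ s) :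
    |centralDiff2 (zhukExt a b δ uL vL uR vR f) t x| ≤ 3 / 2 * ω + ε + (|vL| + |vR|) * δ := by
  have hvL : 0 ≤ |vL| * δ := by positivity
  have hvR : 0 ≤ |vR| * δ := by positivity
  by_cases hxa : x - t < a
  · linarith [abs_centralDiff2_zhukExt_le_of_lt (uR := uR) (vR := vR) hs hδ hω hε hL hx ht hts hxa]
  by_cases hxb : b < x + t
  · linarith [abs_centralDiff2_zhukExt_le_of_gt (uL := uL) (vL := vL) hs hδ hω hε hR hx ht hts hxb]
  push Not at hxa hxb
  have hω₀ := hω x t ht hts hxa hxb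
  have hε₀ : 0 ≤ ε := dist_nonneg.trans (hε x hx x hx (by simp [hδ.le]))
  rw [centralDiff2] at hω₀ ⊢
  rw [zhukExt_of_mem hδ ⟨by linarith, hxb⟩, zhukExt_of_mem hδ hx,
    zhukExt_of_mem hδ ⟨hxa, by linarith [hx.2]⟩]
  linarith [abs_nonneg (f (x + t) - 2 * f x + f (x - t))]

end Extension

section Steklov

variable {E : ℝ → ℝ} {s x : ℝ}

noncomputable def antideriv (E : ℝ → ℝ) (y : ℝ) : ℝ := ∫ σ in (0 : ℝ)..y, E σ

lemma hasDerivAt_antideriv (hE : Continuous E) (y : ℝ) : HasDerivAt (antideriv E) (E y) y :=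
  (hE.integral_hasStrictDerivAt 0 y).hasDerivAt

lemma continuous_antideriv (hE : Continuous E) : Continuous (antideriv E) :=
  continuous_iff_continuousAt.2 fun y => (hasDerivAt_antideriv hE y).continuousAt

lemma integral_eq_antideriv_sub (hE : Continuous E) (p q : ℝ) :
    ∫ σ in p..q, E σ = antideriv E q - antideriv E p :=
  (integral_interval_sub_left (hE.intervalIntegrable _ _) (hE.intervalIntegrable _ _)).symm

lemma integral_comp_add_eq_antideriv_sub (hE : Continuous E) (x w : ℝ) :
    ∫ σ in (0 : ℝ)..w, E (x + σ) = antideriv E (x + w) - antideriv E x := by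
  rw [integral_comp_add_left, add_zero, integral_eq_antideriv_sub hE]

lemma integral_comp_sub_eq_antideriv_sub (hE : Continuous E) (x w : ℝ) :
    ∫ σ in (0 : ℝ)..w, E (x - σ) = antideriv E x - antideriv E (x - w) := by
  rw [integral_comp_sub_left, sub_zero, integral_eq_antideriv_sub hE]

lemma centralDiff2_antideriv (hE : Continuous E) (s x : ℝ) :
    centralDiff2 (antideriv E) s x = ∫ σ in (0 : ℝ)..s, (E (x + σ) - E (x - σ)) := by
  rw [integral_sub, integral_comp_add_eq_antideriv_sub hE, integral_comp_sub_eq_antideriv_sub hE,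
    centralDiff2]
  · ring
  all_goals exact Continuous.intervalIntegrable (by fun_prop) _ _

lemma integral_centralDiff2 (hE : Continuous E) (x w : ℝ) :
    ∫ τ in (0 : ℝ)..w, centralDiff2 E τ x =
      antideriv E (x + w) - antideriv E (x - w) - 2 * w * E x := by
  simp only [centralDiff2]
  rw [integral_add, integral_sub, integral_comp_add_eq_antideriv_sub hE,
    integral_comp_sub_eq_antideriv_sub hE, integral_const, smul_eq_mul]
  · ring
  all_goals exact Continuous.intervalIntegrable (by fun_prop) _ _

lemma hasDerivAt_centralDiff2 {G G' : ℝ → ℝ} (hG : ∀ y, HasDerivAt G (G' y) y) (s x : ℝ) :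
    HasDerivAt (centralDiff2 G s) (centralDiff2 G' s x) x :=
  (((hG (x + s)).comp_add_const x s).sub ((hG x).const_mul 2)).add
    ((hG (x - s)).comp_sub_const x s)

/-- `s⁻² ∫_{-s}^{s} (s - |u|) E (x + u) du`, the second-order Steklov mean of `E` with step `s`. -/
noncomputable def steklovMean2 (E : ℝ → ℝ) (s x : ℝ) : ℝ :=
  centralDiff2 (antideriv (antideriv E)) s x / s ^ 2

lemma hasDerivAt_steklovMean2 (hE : Continuous E) (s x : ℝ) :
    HasDerivAt (steklovMean2 E s) (centralDiff2 (antideriv E) s x / s ^ 2) x :=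
  (hasDerivAt_centralDiff2 (hasDerivAt_antideriv (continuous_antideriv hE)) s x).div_const _

lemma hasDerivAt_centralDiff2_antideriv_div (hE : Continuous E) (s x : ℝ) :
    HasDerivAt (fun y => centralDiff2 (antideriv E) s y / s ^ 2) (centralDiff2 E s x / s ^ 2) x :=
  (hasDerivAt_centralDiff2 (hasDerivAt_antideriv hE) s x).div_const _

lemma abs_centralDiff2_antideriv_le {W : ℝ} (hE : Continuous E) (hs : 0 ≤ s)
    (hW : ∀ σ ∈ Icc 0 s, |E (x + σ) - E (x - σ)| ≤ W) :
    |centralDiff2 (antideriv E) s x| ≤ W * s := by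
  have h := norm_integral_le_of_norm_le_const (a := 0) (b := s) (C := W)
    (f := fun σ => E (x + σ) - E (x - σ)) fun σ hσ => ?_
  · rwa [sub_zero, abs_of_nonneg hs, ← centralDiff2_antideriv hE] at h
  · rw [uIoc_of_le hs] at hσ
    exact hW σ (Ioc_subset_Icc_self hσ)

lemma abs_sub_steklovMean2_le {K : ℝ} (hE : Continuous E) (hs : 0 < s)
    (hK : ∀ σ ∈ Icc 0 s, |centralDiff2 E σ x| ≤ K) :
    |E x - steklovMean2 E s x| ≤ K / 2 := by
  have hrepr : centralDiff2 (antideriv (antideriv E)) s x - s ^ 2 * E x =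
      ∫ σ in (0 : ℝ)..s, ∫ τ in (0 : ℝ)..σ, centralDiff2 E τ x := by
    have := continuous_antideriv hE
    simp only [integral_centralDiff2 hE]
    rw [centralDiff2_antideriv (continuous_antideriv hE), integral_sub, integral_sub, integral_sub,
      integral_mul_const, integral_const_mul, integral_id]
    · ring
    all_goals exact Continuous.intervalIntegrable (by fun_prop) _ _
  have hinner : ∀ σ ∈ Ioc 0 s, ‖∫ τ in (0 : ℝ)..σ, centralDiff2 E τ x‖ ≤ K * σ := by
    intro σ hσ
    have h := norm_integral_le_of_norm_le_const (a := 0) (b := σ) (C := K)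
      (f := fun τ => centralDiff2 E τ x) fun τ hτ => ?_
    · rwa [sub_zero, abs_of_pos hσ.1] at h
    · rw [uIoc_of_le hσ.1.le] at hτ
      exact hK τ ⟨hτ.1.le, hτ.2.trans hσ.2⟩
  have hbound : |centralDiff2 (antideriv (antideriv E)) s x - s ^ 2 * E x| ≤ K / 2 * s ^ 2 := by
    rw [hrepr]
    refine (norm_integral_le_of_norm_le hs.le (Filter.Eventually.of_forall hinner)
      (Continuous.intervalIntegrable (by fun_prop) _ _)).trans_eq ?_
    rw [integral_const_mul, integral_id]
    ring
  have hs2 : 0 < s ^ 2 := by positivity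
  rw [abs_sub_comm, steklovMean2, ← mul_div_cancel_left₀ (E x) hs2.ne', ← sub_div, abs_div,
    abs_of_pos hs2]
  exact (div_le_iff₀ hs2).2 hbound

end Steklov

section Approximation

variable {f : ℝ → ℝ} {a b s : ℝ}

lemma abs_sub_le_omega1_add {E : ℝ → ℝ} (hf : ContinuousOn f (Icc a b))
    (hE : ∀ y ∈ Icc a b, E y = f y) (hs : 2 * s ≤ b - a) {x t : ℝ} (hx : x ∈ Icc a b)
    (ht : 0 ≤ t) (hts : t ≤ s) :
    |E (x + t) - E (x - t)| ≤ 2 * omega1 a b f s + |centralDiff2 E t x| := by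
  obtain ⟨hax, hxb⟩ := hx
  by_cases hxt : x - t < a
  · have hmem : x + t ∈ Icc a b := ⟨by linarith, by linarith⟩
    have h := abs_sub_le_omega1 (s := s) hf hmem ⟨hax, hxb⟩
      (by rwa [add_sub_cancel_left, abs_of_nonneg ht])
    rw [← hE _ hmem, ← hE x ⟨hax, hxb⟩] at h
    have hsum : E (x + t) - E (x - t) = 2 * (E (x + t) - E x) - centralDiff2 E t x := by
      unfold centralDiff2; ring
    calc |E (x + t) - E (x - t)| ≤ |2 * (E (x + t) - E x)| + |centralDiff2 E t x| := by
          rw [hsum]; exact abs_sub _ _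
      _ ≤ _ := by rw [abs_mul, abs_two]; linarith
  · have hmem : x - t ∈ Icc a b := ⟨by linarith, by linarith⟩
    have h := abs_sub_le_omega1 (s := s) hf ⟨hax, hxb⟩ hmem
      (by rwa [sub_sub_cancel, abs_of_nonneg ht])
    rw [← hE _ hmem, ← hE x ⟨hax, hxb⟩] at h
    have hsum : E (x + t) - E (x - t) = centralDiff2 E t x + 2 * (E x - E (x - t)) := by
      unfold centralDiff2; ring
    calc |E (x + t) - E (x - t)| ≤ |centralDiff2 E t x| + |2 * (E x - E (x - t))| := by
          rw [hsum]; exact abs_add_le _ _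
      _ ≤ _ := by rw [abs_mul, abs_two]; linarith

lemma exists_continuous_extension (hf : ContinuousOn f (Icc a b)) (hs : 0 < s)
    (hsb : 2 * s ≤ b - a) {κ : ℝ} (hκ : 0 < κ) :
    ∃ E : ℝ → ℝ, Continuous E ∧ (∀ y ∈ Icc a b, E y = f y) ∧
      ∀ x ∈ Icc a b, ∀ t ∈ Icc 0 s, |centralDiff2 E t x| ≤ 3 / 2 * omega2 a b f s + κ := by
  have hab : a ≤ b := by linarith
  have hω : ∀ x t, 0 ≤ t → t ≤ s → a ≤ x - t → x + t ≤ b →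
      |centralDiff2 f t x| ≤ omega2 a b f s := fun x t ht hts h₁ h₂ =>
    abs_centralDiff2_le_omega2 hf ht hts h₁ h₂
  obtain ⟨uL, vL, hL⟩ := exists_affine_approx (c := a) (e := a + 2 * s) (by linarith)
    (hf.mono (Icc_subset_Icc le_rfl (by linarith)))
    fun x t ht h₁ h₂ => hω x t ht (by linarith) h₁ (by linarith)
  obtain ⟨uR, vR, hR⟩ := exists_affine_approx (c := b - 2 * s) (e := b) (by linarith)
    (hf.mono (Icc_subset_Icc (by linarith) le_rfl))
    fun x t ht h₁ h₂ => hω x t ht (by linarith) (by linarith) h₂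
  obtain ⟨δ₀, hδ₀, hε⟩ := Metric.uniformContinuousOn_iff_le.1
    (isCompact_Icc.uniformContinuousOn_of_continuous hf) (κ / 2) (half_pos hκ)
  set V := |vL| + |vR|
  set δ := min δ₀ (κ / 2 / (V + 1))
  have hδ : 0 < δ := lt_min hδ₀ (by positivity)
  have hV : 0 < V + 1 := by positivity
  have hVδ : V * δ ≤ κ / 2 :=
    calc V * δ ≤ (V + 1) * (κ / 2 / (V + 1)) :=
          mul_le_mul (by linarith) (min_le_right _ _) hδ.le (by positivity)
      _ = κ / 2 := by field_simp
  refine ⟨zhukExt a b δ uL vL uR vR f, continuous_zhukExt hab hf,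
    fun y hy => zhukExt_of_mem hδ hy, fun x hx t ht => ?_⟩
  have := abs_centralDiff2_zhukExt_le hsb hδ hω
    (fun p hp q hq hpq => hε p hp q hq (hpq.trans (min_le_left _ _))) hL hR hx ht.1 ht.2
  linarith

theorem exists_C2_approx (hf : ContinuousOn f (Icc a b)) (hs : 0 < s) (hsb : 2 * s ≤ b - a)
    {κ : ℝ} (hκ : 0 < κ) :
    ∃ g g' g'' : ℝ → ℝ, IsC2On a b g g' g'' ∧ ∀ x ∈ Icc a b,
      |f x - g x| ≤ (3 / 2 * omega2 a b f s + κ) / 2 ∧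
      |g' x| ≤ (2 * omega1 a b f s + (3 / 2 * omega2 a b f s + κ)) / s ∧
      |g'' x| ≤ (3 / 2 * omega2 a b f s + κ) / s ^ 2 := by
  obtain ⟨E, hEc, hEf, hE⟩ := exists_continuous_extension hf hs hsb hκ
  refine ⟨steklovMean2 E s, fun x => centralDiff2 (antideriv E) s x / s ^ 2,
    fun x => centralDiff2 E s x / s ^ 2,
    ⟨fun x _ => (hasDerivAt_steklovMean2 hEc s x).hasDerivWithinAt,
      fun x _ => (hasDerivAt_centralDiff2_antideriv_div hEc s x).hasDerivWithinAt,
      by unfold centralDiff2; fun_prop⟩, fun x hx => ⟨?_, ?_, ?_⟩⟩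
  · rw [← hEf x hx]
    exact abs_sub_steklovMean2_le hEc hs (hE x hx)
  · rw [abs_div, abs_of_pos (pow_pos hs 2)]
    calc _ ≤ (2 * omega1 a b f s + (3 / 2 * omega2 a b f s + κ)) * s / s ^ 2 := by
          gcongr
          exact abs_centralDiff2_antideriv_le hEc hs.le fun σ hσ =>
            (abs_sub_le_omega1_add hf hEf hsb hx hσ.1 hσ.2).trans (add_le_add le_rfl (hE x hx σ hσ))
      _ = _ := by field_simp
  · rw [abs_div, abs_of_pos (pow_pos hs 2)]
    exact div_le_div_of_nonneg_right (hE x hx s ⟨hs.le, le_rfl⟩) (by positivity)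

end Approximation

lemma le_of_forall_pos_le_add_mul {A B C : ℝ} (hC : 0 ≤ C) (h : ∀ κ > 0, A ≤ B + C * κ) :
    A ≤ B := by
  refine le_of_forall_pos_le_add fun ε hε => (h (ε / (C + 1)) (by positivity)).trans ?_
  have : C * (ε / (C + 1)) ≤ ε := by
    rw [← mul_div_assoc, div_le_iff₀ (by positivity)]
    nlinarith
  linarith

lemma norm_le_of_C2_approx {F : Type*} [NormedAddCommGroup F] {a b : ℝ} (hab : a ≤ b)
    {H : (ℝ → ℝ) → F} {γ α β₀ β₁ β₂ : ℝ}
    (hγ : 0 ≤ γ) (hα : 0 ≤ α) (hβ₀ : 0 ≤ β₀) (hβ₁ : 0 ≤ β₁) (hβ₂ : 0 ≤ β₂)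
    (ha : ∀ f g : ℝ → ℝ, ContinuousOn f (Icc a b) → ContinuousOn g (Icc a b) →
      ‖H (f + g)‖ ≤ γ * (‖H f‖ + ‖H g‖))
    (hb : ∀ f : ℝ → ℝ, ContinuousOn f (Icc a b) → ‖H f‖ ≤ α * supOn a b f)
    (hc : ∀ g g' g'' : ℝ → ℝ, IsC2On a b g g' g'' →
      ‖H g‖ ≤ β₀ * supOn a b g + β₁ * supOn a b g' + β₂ * supOn a b g'')
    {f g g' g'' : ℝ → ℝ} (hf : ContinuousOn f (Icc a b)) (hg : IsC2On a b g g' g'')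
    {A B₁ B₂ : ℝ} (hA : ∀ x ∈ Icc a b, |f x - g x| ≤ A) (hB₁ : ∀ x ∈ Icc a b, |g' x| ≤ B₁)
    (hB₂ : ∀ x ∈ Icc a b, |g'' x| ≤ B₂) :
    ‖H f‖ ≤ γ * (α * A + (β₀ * (supOn a b f + A) + β₁ * B₁ + β₂ * B₂)) := by
  have hgc : ContinuousOn g (Icc a b) := fun x hx => (hg.1 x hx).continuousWithinAt
  have hfg : ContinuousOn (f - g) (Icc a b) := hf.sub hgc
  have hsplit : ‖H f‖ ≤ γ * (‖H (f - g)‖ + ‖H g‖) := by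
    simpa only [sub_add_cancel] using ha _ g hfg hgc
  have hg₀ : supOn a b g ≤ supOn a b f + A := supOn_le hab fun x hx => by
    have := abs_le_supOn_s16 hf hx
    have := abs_sub_abs_le_abs_sub (g x) (f x)
    rw [abs_sub_comm] at this
    linarith [hA x hx]
  have hHfg := (hb _ hfg).trans (mul_le_mul_of_nonneg_left (supOn_le hab hA) hα)
  have hHg := (hc g g' g'' hg).trans <| add_le_add_three (mul_le_mul_of_nonneg_left hg₀ hβ₀)
    (mul_le_mul_of_nonneg_left (supOn_le hab hB₁) hβ₁)
    (mul_le_mul_of_nonneg_left (supOn_le hab hB₂) hβ₂)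
  exact hsplit.trans (mul_le_mul_of_nonneg_left (add_le_add hHfg hHg) hγ)

theorem stmt16_general {F : Type*} [NormedAddCommGroup F] (a b : ℝ)
    (H : (ℝ → ℝ) → F) (γ α β₀ β₁ β₂ : ℝ)
    (hγ : 0 ≤ γ) (hα : 0 ≤ α) (hβ₀ : 0 ≤ β₀) (hβ₁ : 0 ≤ β₁) (hβ₂ : 0 ≤ β₂)
    (ha : ∀ f g : ℝ → ℝ, ContinuousOn f (Set.Icc a b) → ContinuousOn g (Set.Icc a b) →
      ‖H (f + g)‖ ≤ γ * (‖H f‖ + ‖H g‖))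
    (hb : ∀ f : ℝ → ℝ, ContinuousOn f (Set.Icc a b) → ‖H f‖ ≤ α * supOn a b f)
    (hc : ∀ g g' g'' : ℝ → ℝ, IsC2On a b g g' g'' →
      ‖H g‖ ≤ β₀ * supOn a b g + β₁ * supOn a b g' + β₂ * supOn a b g'') :
    ∀ f : ℝ → ℝ, ContinuousOn f (Set.Icc a b) → ∀ h : ℝ, 0 < h → h ≤ (b - a) / 2 →
      ‖H f‖ ≤ γ * (β₀ * supOn a b f + (2 * β₁ / h) * omega1 a b f h +
        (3 / 4) * (α + β₀ + 2 * β₁ / h + 2 * β₂ / h ^ 2) * omega2 a b f h) := by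
  intro f hf h hh hhb
  have hab : a ≤ b := by linarith
  refine le_of_forall_pos_le_add_mul (C := γ * (α / 2 + β₀ / 2 + β₁ / h + β₂ / h ^ 2))
    (by positivity) fun κ hκ => ?_
  obtain ⟨g, g', g'', hg, hbound⟩ := exists_C2_approx hf hh (by linarith) hκ
  refine (norm_le_of_C2_approx hab hγ hα hβ₀ hβ₁ hβ₂ ha hb hc hf hg (fun x hx => (hbound x hx).1)
    (fun x hx => (hbound x hx).2.1) (fun x hx => (hbound x hx).2.2)).trans_eq ?_
  ring

theorem stmt16 {F : Type*} [NormedAddCommGroup F] (a b : ℝ) (hab : a < b)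
    (H : (ℝ → ℝ) → F) (γ α β₀ β₁ β₂ : ℝ)
    (hγ : 0 ≤ γ) (hα : 0 ≤ α) (hβ₀ : 0 ≤ β₀) (hβ₁ : 0 ≤ β₁) (hβ₂ : 0 ≤ β₂)
    (ha : ∀ f g : ℝ → ℝ, ContinuousOn f (Set.Icc a b) → ContinuousOn g (Set.Icc a b) →
      ‖H (f + g)‖ ≤ γ * (‖H f‖ + ‖H g‖))
    (hb : ∀ f : ℝ → ℝ, ContinuousOn f (Set.Icc a b) → ‖H f‖ ≤ α * supOn a b f)
    (hc : ∀ g g' g'' : ℝ → ℝ, IsC2On a b g g' g'' →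
      ‖H g‖ ≤ β₀ * supOn a b g + β₁ * supOn a b g' + β₂ * supOn a b g'') :
    ∀ f : ℝ → ℝ, ContinuousOn f (Set.Icc a b) → ∀ h : ℝ, 0 < h → h ≤ (b - a) / 2 →
      ‖H f‖ ≤ γ * (β₀ * supOn a b f + (2 * β₁ / h) * omega1 a b f h +
        (3 / 4) * (α + β₀ + 2 * β₁ / h + 2 * β₂ / h ^ 2) * omega2 a b f h) :=
  stmt16_general a b H γ α β₀ β₁ β₂ hγ hα hβ₀ hβ₁ hβ₂ ha hb hc
end
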